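/- Let Z be a square-integrable random vector in R^k and M a positive integer. Over all (possibly stochastic) encoder–decoder pairs φ: R^k → {0,...,M-1}, ψ: {0,...,M-1} → R^k, with Z' = ψ(φ(Z)) and Z̃ = E[Z | φ(Z)], the minimum of E[‖Z − Z'‖²] subject to the constraint p_{Z'} = p_Z equals twice the unconstrained minimum of E[‖Z − Z̃‖²] over encoders φ. That is, perfect perceptual quality doubles the minimum achievable distortion. -/

import Mathlib

/-!
Write `J` for the encoder output and `Y = d(J, U)` for the reconstruction.

Lower bound: the decoder noise `U` is independent of `(Z, J)`, so `Z - E[Z | J]` is orthogonal to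
`E[Z | J] - Y`, and `Y - E[Y | J]` is orthogonal to every function of `J`. Hence
`E‖Z - Y‖² ≥ E‖Z - E[Z | J]‖² + E‖Y - E[Y | J]‖²`. Under perfect perception `Y` is distributed
like `Z`, so both terms are MMSE distortions of an `M`-cell encoding of the source, each at least
the unconstrained minimum.

Upper bound: given an encoder with cell means `m j`, the nearest-mean quantizer is no worse.
Let the decoder output an independent sample from the source law restricted to the chosen cell.
The reconstruction is then distributed like the source, and on each cell the distortion is
`E‖X - X'‖²` for two independent samples `X, X'` of the cell law, i.e. twice its variance, which
is at most twice the mean squared distance to `m j`.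
-/

open MeasureTheory ProbabilityTheory Real
open Set Filter
open scoped RealInnerProductSpace unitInterval ENNReal

theorem sInf_eq_two_mul_sInf {S T : Set ℝ} (hT : T.Nonempty) (hT₀ : BddBelow T)
    (hST : ∀ c ∈ S, ∃ a ∈ T, ∃ b ∈ T, a + b ≤ c) (hTS : ∀ r ∈ T, ∃ c ∈ S, c ≤ 2 * r) :
    sInf S = 2 * sInf T := by
  have hS : S.Nonempty :=
    let ⟨r, hr⟩ := hT
    let ⟨c, hc, _⟩ := hTS r hr
    ⟨c, hc⟩
  have hS_ge : ∀ c ∈ S, 2 * sInf T ≤ c := fun c hc => by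
    obtain ⟨a, ha, b, hb, hab⟩ := hST c hc
    linarith [csInf_le hT₀ ha, csInf_le hT₀ hb]
  have hT_ge : sInf S / 2 ≤ sInf T := le_csInf hT fun r hr => by
    obtain ⟨c, hc, hcr⟩ := hTS r hr
    linarith [csInf_le ⟨_, hS_ge⟩ hc]
  linarith [le_csInf hS hS_ge]

section SquareIntegrable

variable {Ω E : Type*} [MeasurableSpace Ω] {μ : Measure Ω} [NormedAddCommGroup E]

theorem memLp_comp_of_finite {ι : Type*} [MeasurableSpace ι] [MeasurableSingletonClass ι]
    [Finite ι] [IsFiniteMeasure μ] {J : Ω → ι} (hJ : Measurable J) (g : ι → E)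
    (p : ℝ≥0∞) : MemLp (fun ω => g (J ω)) p μ :=
  MemLp.of_discrete.comp_of_map hJ.aemeasurable

variable [InnerProductSpace ℝ E]

theorem MeasureTheory.MemLp.integrable_inner {F G : Ω → E} (hF : MemLp F 2 μ)
    (hG : MemLp G 2 μ) : Integrable (fun ω => ⟪F ω, G ω⟫) μ :=
  (L2.integrable_inner hF.toLp hG.toLp).congr <| by
    filter_upwards [hF.coeFn_toLp, hG.coeFn_toLp] with ω hFω hGω
    rw [hFω, hGω]

theorem integral_norm_sub_sq_eq_add {F G H : Ω → E} (hF : MemLp F 2 μ) (hG : MemLp G 2 μ)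
    (hH : MemLp H 2 μ) (h : ∫ ω, ⟪F ω - H ω, H ω - G ω⟫ ∂μ = 0) :
    ∫ ω, ‖F ω - G ω‖ ^ 2 ∂μ = ∫ ω, ‖F ω - H ω‖ ^ 2 ∂μ + ∫ ω, ‖H ω - G ω‖ ^ 2 ∂μ := by
  have hFH : MemLp (fun ω => F ω - H ω) 2 μ := hF.sub hH
  have hHG : MemLp (fun ω => H ω - G ω) 2 μ := hH.sub hG
  have hsq : ∀ ω, ‖F ω - G ω‖ ^ 2 =
      ‖F ω - H ω‖ ^ 2 + ‖H ω - G ω‖ ^ 2 + 2 * ⟪F ω - H ω, H ω - G ω⟫ := fun ω => by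
    rw [← sub_add_sub_cancel (F ω) (H ω) (G ω), norm_add_sq_real]
    ring
  simp_rw [hsq]
  rw [integral_add ?_ ?_, integral_add ?_ ?_, integral_const_mul, h, mul_zero, add_zero]
  · exact hFH.integrable_norm_pow two_ne_zero
  · exact hHG.integrable_norm_pow two_ne_zero
  · exact (hFH.integrable_norm_pow two_ne_zero).add (hHG.integrable_norm_pow two_ne_zero)
  · exact (hFH.integrable_inner hHG).const_mul 2

end SquareIntegrable

section FiberMean

variable {Ω E ι : Type*} [MeasurableSpace Ω] {μ : Measure Ω} [NormedAddCommGroup E]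
  [NormedSpace ℝ E] {J : Ω → ι}

noncomputable def fiberMean (μ : Measure Ω) (J : Ω → ι) (W : Ω → E) (j : ι) : E :=
  ∫ ω, W ω ∂μ[|J ⁻¹' {j}]

theorem setIntegral_fiber_eq_smul_fiberMean [IsFiniteMeasure μ] (W : Ω → E) (j : ι) :
    ∫ ω in J ⁻¹' {j}, W ω ∂μ = μ.real (J ⁻¹' {j}) • fiberMean μ J W j := by
  by_cases h : μ (J ⁻¹' {j}) = 0
  · simp [Measure.restrict_eq_zero.2 h, measureReal_def, h]
  · rw [fiberMean, ProbabilityTheory.cond, integral_smul_measure, smul_smul, ENNReal.toReal_inv,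
      measureReal_def, mul_inv_cancel₀ (ENNReal.toReal_ne_zero.2 ⟨h, measure_ne_top _ _⟩), one_smul]

variable [MeasurableSpace ι] [MeasurableSingletonClass ι]

theorem setIntegral_preimage_eq_sum (hJ : Measurable J) {F : Ω → E} (s : Finset ι)
    (hF : ∀ j ∈ s, IntegrableOn F (J ⁻¹' {j}) μ) :
    ∫ ω in J ⁻¹' s, F ω ∂μ = ∑ j ∈ s, ∫ ω in J ⁻¹' {j}, F ω ∂μ := by
  rw [← biUnion_preimage_singleton]
  exact integral_biUnion_finset s (fun j _ => hJ (measurableSet_singleton j))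
    (pairwiseDisjoint_fiber J _) hF

variable [Fintype ι]

theorem integral_eq_sum_setIntegral_fiber (hJ : Measurable J) {F : Ω → E}
    (hF : ∀ j, IntegrableOn F (J ⁻¹' {j}) μ) :
    ∫ ω, F ω ∂μ = ∑ j, ∫ ω in J ⁻¹' {j}, F ω ∂μ := by
  simpa using setIntegral_preimage_eq_sum hJ Finset.univ fun j _ => hF j

variable [IsFiniteMeasure μ] [CompleteSpace E]

theorem condExp_comap_ae_eq_fiberMean (hJ : Measurable J) {W : Ω → E}
    (hW : Integrable W μ) :
    μ[W | MeasurableSpace.comap J inferInstance] =ᵐ[μ] fun ω => fiberMean μ J W (J ω) := by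
  have hg : Integrable (fun ω => fiberMean μ J W (J ω)) μ :=
    (memLp_comp_of_finite hJ _ 1).integrable le_rfl
  refine (ae_eq_condExp_of_forall_setIntegral_eq hJ.comap_le hW
    (fun _ _ _ => hg.integrableOn) ?_ ?_).symm
  · rintro _ ⟨t, -, rfl⟩ -
    lift t to Finset ι using t.toFinite
    rw [setIntegral_preimage_eq_sum hJ t fun _ _ => hg.integrableOn,
      setIntegral_preimage_eq_sum hJ t fun _ _ => hW.integrableOn]
    refine Finset.sum_congr rfl fun j _ => ?_
    rw [setIntegral_congr_fun (hJ (measurableSet_singleton j))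
        (g := fun _ => fiberMean μ J W j) fun ω (hω : J ω = j) => by rw [hω],
      setIntegral_const, setIntegral_fiber_eq_smul_fiberMean]
  · exact ((StronglyMeasurable.of_discrete (f := fiberMean μ J W)).comp_measurable
      (comap_measurable J)).aestronglyMeasurable

theorem integral_norm_sub_condExp_comap_sq (hJ : Measurable J) {W : Ω → E}
    (hW : Integrable W μ) :
    ∫ ω, ‖W ω - μ[W | MeasurableSpace.comap J inferInstance] ω‖ ^ 2 ∂μ =
      ∫ ω, ‖W ω - fiberMean μ J W (J ω)‖ ^ 2 ∂μ :=
  integral_congr_ae <| by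
    filter_upwards [condExp_comap_ae_eq_fiberMean hJ hW] with ω hω
    rw [hω]

end FiberMean

theorem integral_inner_sub_fiberMean_eq_zero {Ω E ι : Type*} [MeasurableSpace Ω] {μ : Measure Ω}
    [IsFiniteMeasure μ] [NormedAddCommGroup E] [InnerProductSpace ℝ E] [CompleteSpace E]
    [Fintype ι] [MeasurableSpace ι] [MeasurableSingletonClass ι] {J : Ω → ι} (hJ : Measurable J)
    {W : Ω → E} (hW : Integrable W μ) (h : ι → E) :
    ∫ ω, ⟪W ω - fiberMean μ J W (J ω), h (J ω)⟫ ∂μ = 0 := by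
  have hfiber : ∀ j, EqOn (fun ω => ⟪W ω - fiberMean μ J W (J ω), h (J ω)⟫)
      (fun ω => ⟪h j, W ω - fiberMean μ J W j⟫) (J ⁻¹' {j}) := fun j ω (hω : J ω = j) => by
    simp only [hω, real_inner_comm]
  have hint : ∀ j, Integrable (fun ω => W ω - fiberMean μ J W j) μ := fun j =>
    hW.sub (integrable_const _)
  rw [integral_eq_sum_setIntegral_fiber hJ fun j =>
    ((hint j).const_inner (h j)).integrableOn.congr_fun (hfiber j).symm
      (hJ (measurableSet_singleton j))]
  refine Finset.sum_eq_zero fun j _ => ?_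
  rw [setIntegral_congr_fun (hJ (measurableSet_singleton j)) (hfiber j),
    integral_inner (hint j).integrableOn,
    integral_sub hW.integrableOn (integrableOn_const (measure_ne_top _ _)),
    setIntegral_const, setIntegral_fiber_eq_smul_fiberMean, sub_self, inner_zero_right]

theorem ProbabilityTheory.IndepFun.integral_comp_eq_integral_integral {Ω α β G : Type*}
    [MeasurableSpace Ω] {μ : Measure Ω} [IsFiniteMeasure μ] [MeasurableSpace α]
    [MeasurableSpace β] [NormedAddCommGroup G] [NormedSpace ℝ G] {X : Ω → α} {U : Ω → β}
    (h : X ⟂ᵢ[μ] U) (hX : Measurable X) (hU : Measurable U) {Φ : α × β → G}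
    (hΦ : StronglyMeasurable Φ) (hint : Integrable (fun ω => Φ (X ω, U ω)) μ) :
    ∫ ω, Φ (X ω, U ω) ∂μ = ∫ u, ∫ ω, Φ (X ω, u) ∂μ ∂(μ.map U) := by
  have hXU : Measurable fun ω => (X ω, U ω) := hX.prodMk hU
  have hmap := h.map_prod_eq_prod_map_map hX.aemeasurable hU.aemeasurable
  have hint' : Integrable Φ ((μ.map X).prod (μ.map U)) := by
    rw [← hmap]
    exact (integrable_map_measure hΦ.aestronglyMeasurable hXU.aemeasurable).2 hint
  rw [← integral_map hXU.aemeasurable hΦ.aestronglyMeasurable, hmap, integral_prod_symm Φ hint']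
  refine integral_congr_ae (Eventually.of_forall fun u => ?_)
  exact integral_map hX.aemeasurable
    (hΦ.comp_measurable measurable_prodMk_right).aestronglyMeasurable

section LowerBound

variable {Ω E ι β : Type*} [MeasurableSpace Ω] {μ : Measure Ω} [IsFiniteMeasure μ]
  [NormedAddCommGroup E] [InnerProductSpace ℝ E] [CompleteSpace E]
  [MeasurableSpace E] [BorelSpace E] [SecondCountableTopology E]
  [Fintype ι] [MeasurableSpace ι] [MeasurableSingletonClass ι] [MeasurableSpace β]
  {X : Ω → E} {J : Ω → ι} {U : Ω → β}

theorem integral_inner_sub_fiberMean_eq_zero_of_indepFun (hX : Measurable X)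
    (hXi : Integrable X μ) (hJ : Measurable J) (hU : Measurable U)
    (hindep : (fun ω => (X ω, J ω)) ⟂ᵢ[μ] U) {h : ι × β → E} (hh : Measurable h)
    (hint : Integrable (fun ω => ⟪X ω - fiberMean μ J X (J ω), h (J ω, U ω)⟫) μ) :
    ∫ ω, ⟪X ω - fiberMean μ J X (J ω), h (J ω, U ω)⟫ ∂μ = 0 := by
  have hΦ : Measurable fun q : (E × ι) × β => ⟪q.1.1 - fiberMean μ J X q.1.2, h (q.1.2, q.2)⟫ :=
    by fun_prop
  refine (hindep.integral_comp_eq_integral_integral (hX.prodMk hJ) hU hΦ.stronglyMeasurable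
    hint).trans ?_
  have hslice : ∀ u, ∫ ω, ⟪X ω - fiberMean μ J X (J ω), h (J ω, u)⟫ ∂μ = 0 := fun u =>
    integral_inner_sub_fiberMean_eq_zero hJ hXi fun j => h (j, u)
  simp only [hslice, integral_zero]

theorem integral_norm_sub_condExp_add_le (hX : Measurable X) (hX2 : MemLp X 2 μ)
    (hJ : Measurable J) (hU : Measurable U) {d : ι × β → E} (hd : Measurable d)
    (hY2 : MemLp (fun ω => d (J ω, U ω)) 2 μ) (hindep : (fun ω => (X ω, J ω)) ⟂ᵢ[μ] U) :
    ∫ ω, ‖X ω - μ[X | MeasurableSpace.comap J inferInstance] ω‖ ^ 2 ∂μ +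
        ∫ ω, ‖d (J ω, U ω) -
          μ[fun ω => d (J ω, U ω) | MeasurableSpace.comap J inferInstance] ω‖ ^ 2 ∂μ ≤
      ∫ ω, ‖X ω - d (J ω, U ω)‖ ^ 2 ∂μ := by
  set Y : Ω → E := fun ω => d (J ω, U ω)
  set m := fiberMean μ J X
  set m' := fiberMean μ J Y
  have hm : MemLp (fun ω => m (J ω)) 2 μ := memLp_comp_of_finite hJ m 2
  have hm' : MemLp (fun ω => m' (J ω)) 2 μ := memLp_comp_of_finite hJ m' 2
  have hXY := integral_norm_sub_sq_eq_add hX2 hY2 hm <|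
    integral_inner_sub_fiberMean_eq_zero_of_indepFun hX (hX2.integrable one_le_two) hJ hU hindep
      (h := fun r => m r.1 - d r) (by fun_prop) ((hX2.sub hm).integrable_inner (hm.sub hY2))
  have hYm := integral_norm_sub_sq_eq_add hY2 hm hm' <|
    integral_inner_sub_fiberMean_eq_zero hJ (hY2.integrable one_le_two) fun j => m' j - m j
  have hflip : ∫ ω, ‖m (J ω) - Y ω‖ ^ 2 ∂μ = ∫ ω, ‖Y ω - m (J ω)‖ ^ 2 ∂μ := by
    simp only [norm_sub_rev (m (J _))]
  rw [integral_norm_sub_condExp_comap_sq hJ (hX2.integrable one_le_two),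
    integral_norm_sub_condExp_comap_sq hJ (hY2.integrable one_le_two)]
  have hnonneg : 0 ≤ ∫ ω, ‖m' (J ω) - m (J ω)‖ ^ 2 ∂μ := integral_nonneg fun ω => sq_nonneg _
  linarith

end LowerBound

theorem exists_measurable_forall_le {X ι : Type*} [MeasurableSpace X] [Fintype ι] [Nonempty ι]
    [LinearOrder ι] [MeasurableSpace ι] [MeasurableSingletonClass ι] {c : ι → X → ℝ}
    (hc : ∀ i, Measurable (c i)) : ∃ e : X → ι, Measurable e ∧ ∀ x i, c (e x) x ≤ c i x := by
  classical
  let P : ι → Set X := fun j => {x | ∀ i, c j x ≤ c i x}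
  have hP : ∀ j, MeasurableSet (P j) := fun j => by
    simp only [P, ofPred_forall]
    exact MeasurableSet.iInter fun i => measurableSet_le (hc j) (hc i)
  let S : X → Finset ι := fun x => Finset.univ.filter (x ∈ P ·)
  have hS : ∀ x, (S x).Nonempty := fun x => by
    obtain ⟨j, -, hj⟩ := Finset.univ.exists_min_image (c · x) Finset.univ_nonempty
    exact ⟨j, by simpa [S, P] using fun i => hj i (Finset.mem_univ i)⟩
  refine ⟨fun x => (S x).min' (hS x), measurable_to_countable' fun j => ?_,
    fun x => (Finset.mem_filter.1 ((S x).min'_mem (hS x))).2⟩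
  have hfiber : (fun x => (S x).min' (hS x)) ⁻¹' {j} = P j ∩ ⋂ i ∈ Iio j, (P i)ᶜ := by
    ext x
    simp only [mem_preimage, mem_singleton_iff, Finset.min'_eq_iff, mem_inter_iff, mem_iInter,
      mem_Iio, mem_compl_iff, S, Finset.mem_filter, Finset.mem_univ, true_and]
    exact and_congr_right fun _ => ⟨fun h i hij hi => (h i hi).not_gt hij,
      fun h i hi => not_lt.1 fun hij => h i hij hi⟩
  rw [hfiber]
  exact (hP j).inter (.biInter (to_countable _) fun i _ => (hP i).compl)

theorem exists_measurable_restrict_eq_smul_map {X : Type*} [MeasurableSpace X]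
    [StandardBorelSpace X] [Nonempty X] (p : Measure X) [IsProbabilityMeasure p] (A : Set X) :
    ∃ g : I → X, Measurable g ∧ p.restrict A = p A • volume.map g := by
  by_cases hA : p A = 0
  · obtain ⟨g, hg, -⟩ := p.exists_measurable_map_eq
    exact ⟨g, hg, by rw [Measure.restrict_eq_zero.2 hA, hA, zero_smul]⟩
  · have := cond_isProbabilityMeasure hA
    obtain ⟨g, hg, hgp⟩ := (p[|A]).exists_measurable_map_eq
    refine ⟨g, hg, ?_⟩
    rw [hgp, ProbabilityTheory.cond, smul_smul, ENNReal.mul_inv_cancel hA (measure_ne_top _ _),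
      one_smul]

theorem measurable_indexed_apply {X Y ι : Type*} [MeasurableSpace X] [MeasurableSpace Y]
    [Countable ι] [MeasurableSpace ι] [MeasurableSingletonClass ι] {e : X → ι}
    (he : Measurable e) {f : ι → Y → X} (hf : ∀ j, Measurable (f j)) :
    Measurable fun q : X × Y => f (e q.1) q.2 :=
  (measurable_from_prod_countable_left (f := fun r : Y × ι => f r.2 r.1) hf).comp
    (measurable_snd.prodMk (he.comp measurable_fst))

theorem map_prod_eq_of_restrict_fiber_eq {X Y ι : Type*} [MeasurableSpace X] [MeasurableSpace Y]
    [Fintype ι] [MeasurableSpace ι] [MeasurableSingletonClass ι] {p : Measure X}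
    [SFinite p] {ρ : Measure Y} [SFinite ρ] {e : X → ι} (he : Measurable e)
    {f : ι → Y → X} (hf : ∀ j, Measurable (f j))
    (hpf : ∀ j, p.restrict (e ⁻¹' {j}) = p (e ⁻¹' {j}) • ρ.map (f j)) :
    (p.prod ρ).map (fun q => f (e q.1) q.2) = p := by
  have hg := measurable_indexed_apply he hf
  ext S hS
  rw [Measure.map_apply hg hS, Measure.prod_apply (hg hS)]
  calc ∫⁻ x, ρ (Prod.mk x ⁻¹' ((fun q => f (e q.1) q.2) ⁻¹' S)) ∂p
      = ∫⁻ x, ρ.map (f (e x)) S ∂p :=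
        lintegral_congr fun x => by rw [Measure.map_apply (hf _) hS]; rfl
    _ = ∑ j, p (e ⁻¹' {j}) * ρ.map (f j) S := by
        rw [← lintegral_map (f := fun j => ρ.map (f j) S) (Measurable.of_discrete) he,
          lintegral_fintype]
        simp only [Measure.map_apply he (measurableSet_singleton _), mul_comm]
    _ = ∑ j, (p.restrict S) (e ⁻¹' {j}) := by
        refine Finset.sum_congr rfl fun j _ => ?_
        rw [← smul_eq_mul, ← Measure.smul_apply, ← hpf,
          Measure.restrict_apply (he (measurableSet_singleton j)),
          Measure.restrict_apply hS, inter_comm]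
    _ = p S := by
        rw [sum_measure_preimage_singleton _ fun j _ => he (measurableSet_singleton j)]
        simp

section Code

variable {E ι : Type*} [NormedAddCommGroup E] [InnerProductSpace ℝ E] [CompleteSpace E]
  [MeasurableSpace E]

theorem integral_integral_norm_sub_sq_le (ν : Measure E) [IsProbabilityMeasure ν]
    (hν : MemLp id 2 ν) (y : E) :
    ∫ z, ∫ w, ‖z - w‖ ^ 2 ∂ν ∂ν ≤ 2 * ∫ z, ‖z - y‖ ^ 2 ∂ν := by
  set c := ∫ w, w ∂ν
  have hid : MemLp (fun w : E => w) 2 ν := hν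
  have hsub : ∫ w, (w - c) ∂ν = 0 := by
    simp [integral_sub (hid.integrable one_le_two) (integrable_const c), c]
  have hsub' : ∫ w, (c - w) ∂ν = 0 := by
    simp [integral_sub (integrable_const c) (hid.integrable one_le_two), c]
  have hslice : ∀ z, ∫ w, ‖z - w‖ ^ 2 ∂ν = ‖z - c‖ ^ 2 + ∫ w, ‖w - c‖ ^ 2 ∂ν := fun z => by
    rw [integral_norm_sub_sq_eq_add (memLp_const z) hid (memLp_const c), integral_const]
    · simp only [probReal_univ, smul_eq_mul, one_mul, norm_sub_rev c]
    · rw [integral_inner (f := fun w => c - w)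
        ((integrable_const c).sub (hid.integrable one_le_two)), hsub',
        inner_zero_right]
  have hy : ∫ z, ‖z - y‖ ^ 2 ∂ν = ∫ z, ‖z - c‖ ^ 2 ∂ν + ‖c - y‖ ^ 2 := by
    rw [integral_norm_sub_sq_eq_add hid (memLp_const y) (memLp_const c), integral_const]
    · simp only [probReal_univ, smul_eq_mul, one_mul]
    · simp only [real_inner_comm (c - y)]
      rw [integral_inner (f := fun w => w - c)
        ((hid.integrable one_le_two).sub (integrable_const c)), hsub,
        inner_zero_right]
  simp only [hslice]
  rw [integral_add ?_ (integrable_const _), integral_const, hy]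
  · simp only [probReal_univ, smul_eq_mul, one_mul]
    nlinarith [sq_nonneg ‖c - y‖]
  · exact (hid.sub (memLp_const c)).integrable_norm_pow two_ne_zero

variable [BorelSpace E]

theorem setIntegral_integral_norm_sub_sq_le {Y : Type*} [MeasurableSpace Y] {p : Measure E}
    [IsFiniteMeasure p] (hp : MemLp id 2 p) {ρ : Measure Y} [IsProbabilityMeasure ρ]
    {A : Set E} {g : Y → E} (hg : Measurable g) (hpA : p.restrict A = p A • ρ.map g) (y : E) :
    ∫ z in A, ∫ u, ‖z - g u‖ ^ 2 ∂ρ ∂p ≤ 2 * ∫ z in A, ‖z - y‖ ^ 2 ∂p := by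
  by_cases h0 : p A = 0
  · simp [Measure.restrict_eq_zero.2 h0]
  have := Measure.isProbabilityMeasure_map (μ := ρ) hg.aemeasurable
  have hν : MemLp id 2 (ρ.map g) := by
    rw [show ρ.map g = (p A)⁻¹ • p.restrict A by
      rw [hpA, smul_smul, ENNReal.inv_mul_cancel h0 (measure_ne_top _ _), one_smul]]
    exact (hp.restrict A).smul_measure (ENNReal.inv_ne_top.2 h0)
  have hslice : ∀ z, ∫ u, ‖z - g u‖ ^ 2 ∂ρ = ∫ w, ‖z - w‖ ^ 2 ∂(ρ.map g) := fun z =>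
    (integral_map hg.aemeasurable
      (by fun_prop : Measurable fun w => ‖z - w‖ ^ 2).aestronglyMeasurable).symm
  simp only [hslice]
  rw [hpA, integral_smul_measure, integral_smul_measure, smul_eq_mul, smul_eq_mul]
  have := mul_le_mul_of_nonneg_left (integral_integral_norm_sub_sq_le _ hν y)
    (ENNReal.toReal_nonneg (a := p A))
  linarith

variable [SecondCountableTopology E] [Fintype ι] [MeasurableSpace ι] [MeasurableSingletonClass ι]

theorem integral_norm_sub_sq_map_prod_le {Y : Type*} [MeasurableSpace Y] {p : Measure E}
    [IsProbabilityMeasure p] (hp : MemLp id 2 p) {ρ : Measure Y} [IsProbabilityMeasure ρ]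
    {e : E → ι} (he : Measurable e) {f : ι → Y → E} (hf : ∀ j, Measurable (f j))
    (hpf : ∀ j, p.restrict (e ⁻¹' {j}) = p (e ⁻¹' {j}) • ρ.map (f j)) (m : ι → E) :
    ∫ q, ‖q.1 - f (e q.1) q.2‖ ^ 2 ∂(p.prod ρ) ≤ 2 * ∫ z, ‖z - m (e z)‖ ^ 2 ∂p := by
  have hlaw := map_prod_eq_of_restrict_fiber_eq he hf hpf
  have hg := measurable_indexed_apply he hf
  have hfst : MemLp (fun q : E × Y => q.1) 2 (p.prod ρ) :=
    (memLp_map_measure_iff aestronglyMeasurable_id measurable_fst.aemeasurable).1 <| by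
      rwa [Measure.map_fst_prod, measure_univ, one_smul]
  have hsnd : MemLp (fun q : E × Y => f (e q.1) q.2) 2 (p.prod ρ) :=
    (memLp_map_measure_iff aestronglyMeasurable_id hg.aemeasurable).1 (by rwa [hlaw])
  have hint : Integrable (fun q : E × Y => ‖q.1 - f (e q.1) q.2‖ ^ 2) (p.prod ρ) :=
    (hfst.sub hsnd).integrable_norm_pow two_ne_zero
  have hm : Integrable (fun z => ‖z - m (e z)‖ ^ 2) p :=
    (MemLp.sub hp (memLp_comp_of_finite he m 2)).integrable_norm_pow two_ne_zero
  rw [integral_prod _ hint,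
    integral_eq_sum_setIntegral_fiber he fun j => hint.integral_prod_left.integrableOn,
    integral_eq_sum_setIntegral_fiber he fun j => hm.integrableOn, Finset.mul_sum]
  refine Finset.sum_le_sum fun j _ => ?_
  have hj : MeasurableSet (e ⁻¹' {j}) := he (measurableSet_singleton j)
  calc ∫ z in e ⁻¹' {j}, ∫ u, ‖z - f (e z) u‖ ^ 2 ∂ρ ∂p
      = ∫ z in e ⁻¹' {j}, ∫ u, ‖z - f j u‖ ^ 2 ∂ρ ∂p :=
        setIntegral_congr_fun hj fun z (hz : e z = j) => by rw [hz]
    _ ≤ 2 * ∫ z in e ⁻¹' {j}, ‖z - m j‖ ^ 2 ∂p :=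
        setIntegral_integral_norm_sub_sq_le hp (hf j) (hpf j) (m j)
    _ = 2 * ∫ z in e ⁻¹' {j}, ‖z - m (e z)‖ ^ 2 ∂p := by
        congr 1
        exact setIntegral_congr_fun hj fun z (hz : e z = j) => by rw [hz]

theorem exists_code_le_two_mul_integral_norm_sub_condExp [Nonempty ι] [LinearOrder ι]
    (p : Measure E) [IsProbabilityMeasure p] (hp : MemLp id 2 p) {Ω : Type*}
    [MeasurableSpace Ω] {μ : Measure Ω} [IsFiniteMeasure μ] {Z : Ω → E} {J : Ω → ι}
    (hZ : Measurable Z) (hJ : Measurable J) (hlaw : μ.map Z = p) :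
    ∃ (e : E → ι) (d : ι × ℝ → E), Measurable e ∧ Measurable d ∧
      (p.prod (volume : Measure I)).map (fun q => d (e q.1, q.2)) = p ∧
      ∫ q, ‖q.1 - d (e q.1, q.2)‖ ^ 2 ∂(p.prod (volume : Measure I)) ≤
        2 * ∫ ω, ‖Z ω - μ[Z | MeasurableSpace.comap J inferInstance] ω‖ ^ 2 ∂μ := by
  set m := fiberMean μ J Z
  have hZ2 : MemLp Z 2 μ :=
    (memLp_map_measure_iff aestronglyMeasurable_id hZ.aemeasurable).1 (by rwa [hlaw])
  obtain ⟨e, he, hnear⟩ := exists_measurable_forall_le (c := fun j z => ‖z - m j‖) fun j => by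
    fun_prop
  choose f hf hpf using fun j => exists_measurable_restrict_eq_smul_map p (e ⁻¹' {j})
  -- The decoder noise is uniform on `I`, read as a real number; `projIcc` recovers it.
  refine ⟨e, fun r => f r.1 (projIcc 0 1 zero_le_one r.2), he,
    measurable_from_prod_countable_right fun j => (hf j).comp continuous_projIcc.measurable,
    ?_, ?_⟩
  · simpa only [projIcc_val] using map_prod_eq_of_restrict_fiber_eq he hf hpf
  simp only [projIcc_val]
  calc ∫ q, ‖q.1 - f (e q.1) q.2‖ ^ 2 ∂(p.prod volume)
      ≤ 2 * ∫ z, ‖z - m (e z)‖ ^ 2 ∂p := integral_norm_sub_sq_map_prod_le hp he hf hpf m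
    _ = 2 * ∫ ω, ‖Z ω - m (e (Z ω))‖ ^ 2 ∂μ := by
        rw [← hlaw, integral_map (f := fun z => ‖z - m (e z)‖ ^ 2) hZ.aemeasurable
          ((measurable_id.sub ((Measurable.of_discrete (f := m)).comp he)).norm.pow_const
            2).aestronglyMeasurable]
    _ ≤ 2 * ∫ ω, ‖Z ω - m (J ω)‖ ^ 2 ∂μ := by
        gcongr 2 * ?_
        refine integral_mono ?_ ?_ fun ω => pow_le_pow_left₀ (norm_nonneg _) (hnear _ _) 2
        · exact (hZ2.sub (memLp_comp_of_finite (he.comp hZ) m 2)).integrable_norm_pow two_ne_zero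
        · exact (hZ2.sub (memLp_comp_of_finite hJ m 2)).integrable_norm_pow two_ne_zero
    _ = 2 * ∫ ω, ‖Z ω - μ[Z | MeasurableSpace.comap J inferInstance] ω‖ ^ 2 ∂μ := by
        rw [integral_norm_sub_condExp_comap_sq hJ (hZ2.integrable one_le_two)]

end Code

theorem stmt1 {k M : ℕ} (hM : 0 < M)
    {Ω : Type} [MeasurableSpace Ω] (μ : Measure Ω) [IsProbabilityMeasure μ]
    (Z : Ω → EuclideanSpace ℝ (Fin k)) (hZmeas : Measurable Z) (hZ2 : MemLp Z 2 μ) :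
    sInf {c : ℝ | ∃ (Ω' : Type) (_ : MeasurableSpace Ω') (μ' : Measure Ω'),
        IsProbabilityMeasure μ' ∧
        ∃ (Z' : Ω' → EuclideanSpace ℝ (Fin k)) (V U : Ω' → ℝ)
          (e : EuclideanSpace ℝ (Fin k) × ℝ → Fin M)
          (d : Fin M × ℝ → EuclideanSpace ℝ (Fin k)),
          Measurable Z' ∧ Measurable V ∧ Measurable U ∧ Measurable e ∧ Measurable d ∧
          μ'.map Z' = μ.map Z ∧
          IndepFun Z' V μ' ∧
          IndepFun (fun ω => (Z' ω, e (Z' ω, V ω))) U μ' ∧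
          μ'.map (fun ω => d (e (Z' ω, V ω), U ω)) = μ.map Z ∧
          c = ∫ ω, ‖Z' ω - d (e (Z' ω, V ω), U ω)‖ ^ 2 ∂μ'} =
    2 * sInf {c : ℝ | ∃ (Ω' : Type) (_ : MeasurableSpace Ω') (μ' : Measure Ω'),
        IsProbabilityMeasure μ' ∧
        ∃ (Z' : Ω' → EuclideanSpace ℝ (Fin k)) (J : Ω' → Fin M),
          Measurable Z' ∧ Measurable J ∧
          μ'.map Z' = μ.map Z ∧
          c = ∫ ω, ‖Z' ω - (μ'[Z' | MeasurableSpace.comap J inferInstance]) ω‖ ^ 2 ∂μ'} := by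
  have : Nonempty (Fin M) := ⟨⟨0, hM⟩⟩
  have := Measure.isProbabilityMeasure_map (μ := μ) hZmeas.aemeasurable
  have hp := (memLp_map_measure_iff aestronglyMeasurable_id hZmeas.aemeasurable).2 hZ2
  have hsame {Ω' : Type} [MeasurableSpace Ω'] {μ' : Measure Ω'} {Z' : Ω' → _}
      (hZ' : Measurable Z') (hlaw : μ'.map Z' = μ.map Z) : MemLp Z' 2 μ' :=
    (IdentDistrib.mk hZmeas.aemeasurable hZ'.aemeasurable hlaw.symm).memLp_snd hZ2
  refine sInf_eq_two_mul_sInf ⟨_, Ω, _, μ, ‹_›, Z, fun _ => ⟨0, hM⟩, hZmeas, measurable_const,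
    rfl, rfl⟩ ⟨0, ?_⟩ ?_ ?_
  · rintro _ ⟨Ω', _, μ', _, Z', J, -, -, -, rfl⟩
    exact integral_nonneg fun ω => sq_nonneg _
  · rintro _ ⟨Ω', _, μ', _, Z', V, U, e, d, hZ', hV, hU, he, hd, hlaw, -, hindep, hlaw', rfl⟩
    have hJ := he.comp (hZ'.prodMk hV)
    have hY := hd.comp (hJ.prodMk hU)
    exact ⟨_, ⟨Ω', _, μ', ‹_›, Z', _, hZ', hJ, hlaw, rfl⟩, _, ⟨Ω', _, μ', ‹_›, _, _, hY, hJ, hlaw',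
      rfl⟩, integral_norm_sub_condExp_add_le hZ' (hsame hZ' hlaw) hJ hU hd (hsame hY hlaw') hindep⟩
  · rintro _ ⟨Ω₁, _, μ₁, _, Z₁, J₁, hZ₁, hJ₁, hlaw, rfl⟩
    obtain ⟨e, d, he, hd, hrec, hdist⟩ :=
      exists_code_le_two_mul_integral_norm_sub_condExp _ hp hZ₁ hJ₁ hlaw
    exact ⟨_, ⟨EuclideanSpace ℝ (Fin k) × I, _, _, inferInstance, Prod.fst, 0, fun q => q.2,
      fun q => e q.1, d,
      measurable_fst, measurable_const, measurable_subtype_coe.comp measurable_snd,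
      he.comp measurable_fst, hd, by simp, indepFun_const_right _ _,
      indepFun_prod (measurable_id.prodMk he) measurable_subtype_coe, hrec, rfl⟩, hdist⟩
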